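/- arXiv:2309.13955 — 2 statements merged into one kernel-verified Lean document; each statement's English description precedes it below -/
import Mathlib

section
/- The tabular Q-learning update Q_n(s,a) = Q_{n−1}(s,a) + α [r + γ max_{a'} Q_{n−1}(s',a') − Q_{n−1}(s,a)], applied synchronously to all state-action pairs with deterministic transitions and constant step size α ∈ (0,1], converges to the fixed point Q* of the Bellman operator, with ‖Q_n − Q*‖_∞ ≤ (1 − α(1−γ))^n ‖Q_0 − Q*‖_∞. -/
open Finset

lemma abs_sup'_sub_sup'_le' {A : Type*} (s : Finset A) (hs : s.Nonempty)
    (F G : A → ℝ) (M : ℝ) (h : ∀ a ∈ s, |F a - G a| ≤ M) :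
    |s.sup' hs F - s.sup' hs G| ≤ M := by
  rw [abs_sub_le_iff]
  constructor
  · rw [sub_le_iff_le_add]
    apply Finset.sup'_le
    intro a ha
    have h1 := abs_le.1 (h a ha)
    have h2 := Finset.le_sup' G ha
    linarith [h1.1, h1.2, h2]
  · rw [sub_le_iff_le_add]
    apply Finset.sup'_le
    intro a ha
    have h1 := abs_le.1 (h a ha)
    have h2 := Finset.le_sup' F ha
    linarith [h1.1, h1.2, h2]

/-- Synchronous tabular Q-learning on a finite deterministic MDP with constant step size
`α ∈ (0,1]` converges geometrically to the fixed point `Q*` of the Bellman operator: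
`‖Q_n − Q*‖_∞ ≤ (1 − α(1−γ))^n ‖Q_0 − Q*‖_∞`. -/
theorem synchronous_q_learning_convergence
    {S A : Type*} [Fintype S] [Fintype A] [Nonempty S] [Nonempty A]
    (f : S → A → S) (r : S → A → ℝ)
    (γ : ℝ) (hγ0 : 0 ≤ γ) (hγ1 : γ < 1)
    (α : ℝ) (hα0 : 0 < α) (hα1 : α ≤ 1)
    (Qstar : S → A → ℝ)
    (hfix : ∀ s a, Qstar s a =
      r s a + γ * (univ.sup' univ_nonempty fun a' => Qstar (f s a) a'))
    (Q : ℕ → S → A → ℝ)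
    (hrec : ∀ n s a, Q (n + 1) s a =
      Q n s a + α * (r s a + γ * (univ.sup' univ_nonempty fun a' => Q n (f s a) a')
        - Q n s a)) :
    ∀ n, (univ.sup' univ_nonempty fun p : S × A => |Q n p.1 p.2 - Qstar p.1 p.2|) ≤
      (1 - α * (1 - γ)) ^ n *
        univ.sup' univ_nonempty fun p : S × A => |Q 0 p.1 p.2 - Qstar p.1 p.2| := by
  have hc0 : 0 ≤ 1 - α * (1 - γ) := by nlinarith
  intro n
  induction n with
  | zero => simp
  | succ n ih =>
    set Dn : ℝ := univ.sup' univ_nonempty fun p : S × A => |Q n p.1 p.2 - Qstar p.1 p.2|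
      with hDn
    have hpt : ∀ s a, |Q n s a - Qstar s a| ≤ Dn := fun s a =>
      Finset.le_sup' (f := fun p : S × A => |Q n p.1 p.2 - Qstar p.1 p.2|)
        (Finset.mem_univ (s, a))
    have hstep : (univ.sup' univ_nonempty fun p : S × A => |Q (n+1) p.1 p.2 - Qstar p.1 p.2|)
        ≤ (1 - α * (1 - γ)) * Dn := by
      apply Finset.sup'_le
      rintro ⟨s, a⟩ _
      have hsup : |(univ.sup' univ_nonempty fun a' => Q n (f s a) a') -
          (univ.sup' univ_nonempty fun a' => Qstar (f s a) a')| ≤ Dn := by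
        apply abs_sup'_sub_sup'_le'
        intro a' _
        exact hpt (f s a) a'
      have h1 := hpt s a
      have key : Q (n+1) s a - Qstar s a =
          (1 - α) * (Q n s a - Qstar s a) +
          α * γ * ((univ.sup' univ_nonempty fun a' => Q n (f s a) a') -
            (univ.sup' univ_nonempty fun a' => Qstar (f s a) a')) := by
        rw [hrec, hfix]; ring
      have habs : |Q (n+1) s a - Qstar s a| ≤
          (1 - α) * |Q n s a - Qstar s a| + α * γ *
          |(univ.sup' univ_nonempty fun a' => Q n (f s a) a') -
            (univ.sup' univ_nonempty fun a' => Qstar (f s a) a')| := by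
        rw [key]
        refine (abs_add_le _ _).trans ?_
        rw [abs_mul, abs_mul]
        rw [abs_of_nonneg (by linarith : (0:ℝ) ≤ 1 - α),
          abs_of_nonneg (by positivity : (0:ℝ) ≤ α * γ)]
      show |Q (n+1) s a - Qstar s a| ≤ (1 - α * (1 - γ)) * Dn
      have e1 : (0:ℝ) ≤ (1 - α) * (Dn - |Q n s a - Qstar s a|) :=
        mul_nonneg (by linarith) (by linarith)
      have e2 : (0:ℝ) ≤ α * γ * (Dn - |(univ.sup' univ_nonempty fun a' => Q n (f s a) a') -
          (univ.sup' univ_nonempty fun a' => Qstar (f s a) a')|) :=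
        mul_nonneg (by positivity) (by linarith)
      linarith [habs, e1, e2]
    calc (univ.sup' univ_nonempty fun p : S × A => |Q (n+1) p.1 p.2 - Qstar p.1 p.2|)
        ≤ (1 - α * (1 - γ)) * Dn := hstep
      _ ≤ (1 - α * (1 - γ)) * ((1 - α * (1 - γ)) ^ n *
          univ.sup' univ_nonempty fun p : S × A => |Q 0 p.1 p.2 - Qstar p.1 p.2|) :=
        mul_le_mul_of_nonneg_left ih hc0
      _ = (1 - α * (1 - γ)) ^ (n+1) *
          univ.sup' univ_nonempty fun p : S × A => |Q 0 p.1 p.2 - Qstar p.1 p.2| := by ring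
end

section
/- Double Q-learning's evaluation-by-second-network eliminates one-sided bias for independent estimators: if X, Y : Ω → ℝ^n are independent random vectors with E[Y_i] = q_i for all i, and a*(ω) = argmax_i X_i(ω) (any measurable selection), then E[Y_{a*}] = E[q_{a*}] ≤ max_i q_i, in contrast with E[max_i X_i] ≥ max_i E[X_i]. -/
/-!
Split `Y_{a*}` along the events `{a* = i}`: `Y_{a*} = ∑ i, 1{a* = i} * Y_i`. Since `a*` is a
function of `X`, each indicator `1{a* = i}` is independent of `Y_i`, so the expectation of the
product factors as `P(a* = i) * q_i`; summing back gives `E[q_{a*}]`, an average of the `q_i`,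
which is at most their maximum.
-/

open Finset MeasureTheory ProbabilityTheory

section

variable {Ω ι : Type*} [MeasurableSpace Ω] {μ : Measure Ω}
  [Fintype ι] [MeasurableSpace ι] [MeasurableSingletonClass ι] {A : Ω → ι}

theorem integral_eval_comp_eq_sum [DecidableEq ι] (hA : Measurable A) {Z : Ω → ι → ℝ}
    (hZ : ∀ i, Integrable (fun ω => Z ω i) μ) :
    ∫ ω, Z ω (A ω) ∂μ = ∑ i, ∫ ω, (if A ω = i then 1 else 0) * Z ω i ∂μ := by
  have hdecomp : ∀ ω, Z ω (A ω) = ∑ i, (if A ω = i then 1 else 0) * Z ω i := fun ω => by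
    simp only [ite_mul, one_mul, zero_mul, sum_ite_eq, mem_univ, if_true]
  simp_rw [hdecomp]
  refine integral_finsetSum _ fun i _ => (hZ i).bdd_mul (c := 1) ?_ ?_
  · exact (measurable_const.ite (hA (measurableSet_singleton i))
      measurable_const).aestronglyMeasurable
  · exact Filter.Eventually.of_forall fun ω => by split_ifs <;> simp

theorem ProbabilityTheory.IndepFun.integral_eval_comp [IsFiniteMeasure μ] {Y : Ω → ι → ℝ}
    {m : ι → ℝ} (hA : Measurable A) (hAY : IndepFun A Y μ)
    (hY : ∀ i, Integrable (fun ω => Y ω i) μ) (hm : ∀ i, ∫ ω, Y ω i ∂μ = m i) :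
    ∫ ω, Y ω (A ω) ∂μ = ∫ ω, m (A ω) ∂μ := by
  classical
  rw [integral_eval_comp_eq_sum hA hY,
    integral_eval_comp_eq_sum (Z := fun _ => m) hA fun _ => integrable_const _]
  refine sum_congr rfl fun i _ => ?_
  have hind : Measurable fun a : ι => if a = i then (1 : ℝ) else 0 :=
    measurable_const.ite (measurableSet_singleton i) measurable_const
  rw [integral_mul_const, ← hm i]
  exact (hAY.comp hind (measurable_pi_apply i)).integral_fun_mul_eq_mul_integral
    (hind.comp hA).aestronglyMeasurable (hY i).aestronglyMeasurable

theorem integral_comp_le_sup' [IsProbabilityMeasure μ] [Nonempty ι] (hA : Measurable A)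
    (q : ι → ℝ) : ∫ ω, q (A ω) ∂μ ≤ univ.sup' univ_nonempty q := by
  have hq : Integrable (fun ω => q (A ω)) μ :=
    (Integrable.of_finite (μ := μ.map A)).comp_measurable hA
  calc ∫ ω, q (A ω) ∂μ ≤ ∫ _, univ.sup' univ_nonempty q ∂μ :=
        integral_mono hq (integrable_const _) fun ω => le_sup' q (mem_univ (A ω))
    _ = univ.sup' univ_nonempty q := by simp

end

theorem double_q_learning_no_overestimation_general
    {Ω : Type*} [MeasureSpace Ω] (hP : IsProbabilityMeasure (volume : Measure Ω))
    {n : ℕ} [NeZero n]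
    (X Y : Ω → Fin n → ℝ) (hXm : Measurable X)
    (hindep : ProbabilityTheory.IndepFun X Y)
    (q : Fin n → ℝ)
    (hYint : ∀ i, Integrable fun ω => Y ω i)
    (hq : ∀ i, (∫ ω, Y ω i) = q i)
    (astar : Ω → Fin n)
    (hmeas : ∃ g : (Fin n → ℝ) → Fin n, Measurable g ∧ astar = g ∘ X) :
    (∫ ω, Y ω (astar ω)) = (∫ ω, q (astar ω)) ∧
      (∫ ω, q (astar ω)) ≤ univ.sup' univ_nonempty fun i => q i := by
  obtain ⟨g, hg, rfl⟩ := hmeas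
  have hA : Measurable (g ∘ X) := hg.comp hXm
  have hAY : IndepFun (g ∘ X) Y := hindep.comp hg measurable_id
  exact ⟨hAY.integral_eval_comp hA hYint hq, integral_comp_le_sup' hA q⟩

/-- Double Q-learning's evaluation-by-second-network eliminates one-sided bias for
independent estimators: if `X, Y : Ω → ℝ^n` are independent, `E[Y_i] = q_i`, and
`a*(ω)` is a measurable argmax selection of `X`, then
`E[Y_{a*}] = E[q_{a*}] ≤ max_i q_i`. -/
theorem double_q_learning_no_overestimation
    {Ω : Type*} [MeasureSpace Ω] (hP : IsProbabilityMeasure (volume : Measure Ω))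
    {n : ℕ} [NeZero n]
    (X Y : Ω → Fin n → ℝ) (hXm : Measurable X) (hYm : Measurable Y)
    (hindep : ProbabilityTheory.IndepFun X Y)
    (q : Fin n → ℝ)
    (hYint : ∀ i, Integrable fun ω => Y ω i)
    (hq : ∀ i, (∫ ω, Y ω i) = q i)
    (astar : Ω → Fin n)
    (hargmax : ∀ ω i, X ω i ≤ X ω (astar ω))
    (hmeas : ∃ g : (Fin n → ℝ) → Fin n, Measurable g ∧ astar = g ∘ X)
    (hint : Integrable fun ω => Y ω (astar ω)) :
    (∫ ω, Y ω (astar ω)) = (∫ ω, q (astar ω)) ∧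
      (∫ ω, q (astar ω)) ≤ univ.sup' univ_nonempty fun i => q i :=
  double_q_learning_no_overestimation_general hP X Y hXm hindep q hYint hq astar hmeas
end
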